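/- arXiv:2102.08941 — 6 statements merged into one kernel-verified Lean document; each statement's English description precedes it below -/
import Mathlib

section
/- Let n' be a positive natural number, K, K' positive natural numbers, s : Fin n' → Fin K' a labeling with one-hot matrix S, and h : Fin n' → Fin K a surjective partition assignment with one-hot matrix H and centroid matrix G. Then G is a least-squares optimum: for every matrix C ∈ Matrix (Fin K) (Fin K') ℝ, the squared Frobenius norm satisfies ‖S − H * G‖_F² ≤ ‖S − H * C‖_F². -/
/-!
Multiplying by the one-hot matrix `H` copies row `h i` of `C` into row `i`, so the squared
error splits over the blocks `{i | h i = k}` and columns `j` into independent problems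
`∑_{h i = k} (S i j - C k j)²` in the single scalar `C k j`. Each is minimized by the mean of
`S i j` over the block, and since `S` is one-hot that mean is `n_{kj} / n_{k+} = G k j`.
-/

open Finset

theorem Finset.sum_sub_sq_eq_sum_sub_mean_sq_add {ι : Type*} (t : Finset ι) (x : ι → ℝ)
    (c : ℝ) :
    ∑ i ∈ t, (x i - c) ^ 2 =
      ∑ i ∈ t, (x i - (∑ i ∈ t, x i) / #t) ^ 2 + #t * ((∑ i ∈ t, x i) / #t - c) ^ 2 := by
  set m := (∑ i ∈ t, x i) / #t
  have hsum : ∑ i ∈ t, x i = #t * m := by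
    rcases t.eq_empty_or_nonempty with rfl | ht
    · simp
    · have : (#t : ℝ) ≠ 0 := by exact_mod_cast ht.card_pos.ne'
      exact (mul_div_cancel₀ _ this).symm
  have hsq : ∀ i ∈ t, (x i - c) ^ 2 = (x i - m) ^ 2 + 2 * (m - c) * x i - (m ^ 2 - c ^ 2) :=
    fun i _ => by ring
  rw [sum_congr rfl hsq, sum_sub_distrib, sum_add_distrib, ← mul_sum, hsum, sum_const,
    nsmul_eq_mul]
  ring

theorem Finset.sum_sub_mean_sq_le {ι : Type*} (t : Finset ι) (x : ι → ℝ) (c : ℝ) :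
    ∑ i ∈ t, (x i - (∑ i ∈ t, x i) / #t) ^ 2 ≤ ∑ i ∈ t, (x i - c) ^ 2 := by
  rw [t.sum_sub_sq_eq_sum_sub_mean_sq_add x c]
  exact le_add_of_nonneg_right (by positivity)

theorem Matrix.oneHot_mul_apply {m n p α : Type*} [Fintype n] [DecidableEq n]
    [NonAssocSemiring α] {h : m → n} {H : Matrix m n α}
    (hH : ∀ i k, H i k = if h i = k then 1 else 0) (M : Matrix n p α) (i : m) (j : p) :
    (H * M) i j = M (h i) j := by
  simp [Matrix.mul_apply, hH]

theorem Finset.sum_sum_comp_eq_sum_fiberwise {m n p M : Type*} [Fintype m] [Fintype n]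
    [Fintype p] [DecidableEq n] [AddCommMonoid M] (h : m → n) (f : m → p → n → M) :
    ∑ i, ∑ j, f i j (h i) = ∑ k, ∑ j, ∑ i ∈ univ.filter (fun i => h i = k), f i j k := by
  rw [← sum_fiberwise univ h]
  refine sum_congr rfl fun k _ => ?_
  rw [sum_comm]
  refine sum_congr rfl fun j _ => sum_congr rfl fun i hi => ?_
  rw [(mem_filter.mp hi).2]

theorem centroid_least_squares_general
    (n' K K' : ℕ)
    (s : Fin n' → Fin K') (h : Fin n' → Fin K)
    (S : Matrix (Fin n') (Fin K') ℝ)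
    (hS : ∀ i j, S i j = if s i = j then (1 : ℝ) else 0)
    (H : Matrix (Fin n') (Fin K) ℝ)
    (hH : ∀ i k, H i k = if h i = k then (1 : ℝ) else 0)
    (G : Matrix (Fin K) (Fin K') ℝ)
    (hG : ∀ k j, G k j =
      ((Finset.univ.filter (fun i => h i = k ∧ s i = j)).card : ℝ) /
      ((Finset.univ.filter (fun i => h i = k)).card : ℝ))
    (C : Matrix (Fin K) (Fin K') ℝ) :
    ∑ i, ∑ j, ((S - H * G) i j) ^ 2 ≤ ∑ i, ∑ j, ((S - H * C) i j) ^ 2 := by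
  have hblocks : ∀ M : Matrix (Fin K) (Fin K') ℝ, ∑ i, ∑ j, ((S - H * M) i j) ^ 2 =
      ∑ k, ∑ j, ∑ i ∈ univ.filter (fun i => h i = k), (S i j - M k j) ^ 2 := fun M => by
    simp only [Matrix.sub_apply, Matrix.oneHot_mul_apply hH]
    exact sum_sum_comp_eq_sum_fiberwise h fun i j k => (S i j - M k j) ^ 2
  have hmean : ∀ k j, G k j =
      (∑ i ∈ univ.filter (fun i => h i = k), S i j) / #(univ.filter (fun i => h i = k)) := by
    intro k j
    simp only [hG, hS, sum_boole, filter_filter]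
  rw [hblocks, hblocks]
  refine sum_le_sum fun k _ => sum_le_sum fun j _ => ?_
  rw [hmean]
  exact sum_sub_mean_sq_le _ (fun i => S i j) (C k j)

/-- For a labeling `s` with one-hot matrix `S` and a surjective partition
assignment `h` with one-hot matrix `H` and centroid matrix `G`, the centroid matrix is a
least-squares optimum: `‖S − H * G‖_F² ≤ ‖S − H * C‖_F²` for every matrix `C`. -/
theorem centroid_least_squares
    (n' K K' : ℕ) (hn' : 0 < n') (hK : 0 < K) (hK' : 0 < K')
    (s : Fin n' → Fin K') (h : Fin n' → Fin K) (hsurj : Function.Surjective h)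
    (S : Matrix (Fin n') (Fin K') ℝ)
    (hS : ∀ i j, S i j = if s i = j then (1 : ℝ) else 0)
    (H : Matrix (Fin n') (Fin K) ℝ)
    (hH : ∀ i k, H i k = if h i = k then (1 : ℝ) else 0)
    (G : Matrix (Fin K) (Fin K') ℝ)
    (hG : ∀ k j, G k j =
      ((Finset.univ.filter (fun i => h i = k ∧ s i = j)).card : ℝ) /
      ((Finset.univ.filter (fun i => h i = k)).card : ℝ))
    (C : Matrix (Fin K) (Fin K') ℝ) :
    ∑ i, ∑ j, ((S - H * G) i j) ^ 2 ≤ ∑ i, ∑ j, ((S - H * C) i j) ^ 2 :=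
  centroid_least_squares_general n' K K' s h S hS H hH G hG C
end

section
/- Let n' be a positive natural number, K, K' positive natural numbers, s : Fin n' → Fin K' a labeling with one-hot matrix S, and h : Fin n' → Fin K a surjective partition assignment with one-hot matrix H and centroid matrix G. Then the squared Frobenius distance from S to its cluster-wise centroid reconstruction satisfies the Pythagorean decomposition ‖S − H * G‖_F² = ‖S‖_F² − Σ_{k=1}^{K} n_{k+} · Σ_{j=1}^{K'} (G k j)². -/
/-! Within each cluster, the squared distance of the points to their mean equals the sum of the
squared points minus the cluster size times the squared mean (the finite form of
`Var X = E X² - (E X)²`). The rows of `H * G` are exactly the cluster means of the rows of `S`,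
so summing this identity over clusters and columns gives the decomposition; that `S` is one-hot
matters only in identifying `G` with those means. -/

open Finset

variable {ι κ : Type*}

lemma Finset.sum_sq_sub_average (s : Finset ι) (f : ι → ℝ) :
    ∑ i ∈ s, (f i - (∑ i ∈ s, f i) / #s) ^ 2 =
      ∑ i ∈ s, f i ^ 2 - #s * ((∑ i ∈ s, f i) / #s) ^ 2 := by
  rcases s.eq_empty_or_nonempty with rfl | hs
  · simp
  have hcard : (#s : ℝ) ≠ 0 := by exact_mod_cast hs.card_pos.ne'
  simp only [sub_sq, sum_add_distrib, sum_sub_distrib, sum_const, nsmul_eq_mul, ← sum_mul,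
    ← mul_sum]
  field_simp
  ring

/-- On an empty fiber this is `0 / 0 = 0`. -/
noncomputable def fiberMean [Fintype ι] [DecidableEq κ] (h : ι → κ) (f : ι → ℝ) (k : κ) : ℝ :=
  (∑ i with h i = k, f i) / #{i | h i = k}

lemma sum_sq_sub_fiberMean [Fintype ι] [Fintype κ] [DecidableEq κ] (h : ι → κ) (f : ι → ℝ) :
    ∑ i, (f i - fiberMean h f (h i)) ^ 2 =
      ∑ i, f i ^ 2 - ∑ k, #{i | h i = k} * fiberMean h f k ^ 2 := by
  rw [← sum_fiberwise univ h, ← sum_fiberwise univ h (fun i ↦ f i ^ 2), ← sum_sub_distrib]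
  refine sum_congr rfl fun k _ ↦ ?_
  rw [fiberMean, ← sum_sq_sub_average]
  refine sum_congr rfl fun i hi ↦ ?_
  rw [(mem_filter.1 hi).2, fiberMean]

theorem centroid_pythagorean_decomposition_general
    (n' K K' : ℕ)
    (s : Fin n' → Fin K') (h : Fin n' → Fin K)
    (S : Matrix (Fin n') (Fin K') ℝ)
    (hS : ∀ i j, S i j = if s i = j then (1 : ℝ) else 0)
    (H : Matrix (Fin n') (Fin K) ℝ)
    (hH : ∀ i k, H i k = if h i = k then (1 : ℝ) else 0)
    (nk : Fin K → ℕ)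
    (hnk : ∀ k, nk k = (Finset.univ.filter (fun i => h i = k)).card)
    (G : Matrix (Fin K) (Fin K') ℝ)
    (hG : ∀ k j, G k j =
      ((Finset.univ.filter (fun i => h i = k ∧ s i = j)).card : ℝ) / (nk k : ℝ)) :
    ∑ i, ∑ j, ((S - H * G) i j) ^ 2 =
      (∑ i, ∑ j, (S i j) ^ 2) - ∑ k, (nk k : ℝ) * ∑ j, (G k j) ^ 2 := by
  have hHG : ∀ i j, (H * G) i j = G (h i) j := fun i j ↦ by
    simp [Matrix.mul_apply, hH]
  have hG_mean : ∀ k j, G k j = fiberMean h (S · j) k := fun k j ↦ by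
    simp [hG, fiberMean, hnk, hS, sum_boole, filter_filter]
  calc ∑ i, ∑ j, ((S - H * G) i j) ^ 2
      = ∑ j, ∑ i, (S i j - fiberMean h (S · j) (h i)) ^ 2 := by
        simp only [Matrix.sub_apply, hHG, hG_mean]
        exact sum_comm
    _ = ∑ j, (∑ i, S i j ^ 2 - ∑ k, (nk k : ℝ) * G k j ^ 2) := by
        simp only [sum_sq_sub_fiberMean, hnk, hG_mean]
    _ = (∑ i, ∑ j, (S i j) ^ 2) - ∑ k, (nk k : ℝ) * ∑ j, (G k j) ^ 2 := by
        simp only [sum_sub_distrib, mul_sum]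
        rw [sum_comm, sum_comm (γ := Fin K)]

/-- Pythagorean decomposition of the squared Frobenius distance from the
one-hot matrix `S` to its cluster-wise centroid reconstruction `H * G`:
`‖S − H * G‖_F² = ‖S‖_F² − Σ_k n_{k+} · Σ_j (G k j)²`. -/
theorem centroid_pythagorean_decomposition
    (n' K K' : ℕ) (hn' : 0 < n') (hK : 0 < K) (hK' : 0 < K')
    (s : Fin n' → Fin K') (h : Fin n' → Fin K) (hsurj : Function.Surjective h)
    (S : Matrix (Fin n') (Fin K') ℝ)
    (hS : ∀ i j, S i j = if s i = j then (1 : ℝ) else 0)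
    (H : Matrix (Fin n') (Fin K) ℝ)
    (hH : ∀ i k, H i k = if h i = k then (1 : ℝ) else 0)
    (nk : Fin K → ℕ)
    (hnk : ∀ k, nk k = (Finset.univ.filter (fun i => h i = k)).card)
    (G : Matrix (Fin K) (Fin K') ℝ)
    (hG : ∀ k j, G k j =
      ((Finset.univ.filter (fun i => h i = k ∧ s i = j)).card : ℝ) / (nk k : ℝ)) :
    ∑ i, ∑ j, ((S - H * G) i j) ^ 2 =
      (∑ i, ∑ j, (S i j) ^ 2) - ∑ k, (nk k : ℝ) * ∑ j, (G k j) ^ 2 :=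
  centroid_pythagorean_decomposition_general n' K K' s h S hS H hH nk hnk G hG
end

section
/- (Main Lemma) Let n' be a positive natural number, K, K' positive natural numbers, s : Fin n' → Fin K' a labeling with one-hot matrix S, and h : Fin n' → Fin K a surjective partition assignment with one-hot matrix H and centroid matrix G. Then the category utility function satisfies U_c = −(1/n') · ‖S − H * G‖_F² + (1 − Σ_{j=1}^{K'} (p_{+j})²); in particular, U_c equals −‖S − H * G‖_F² up to an affine rescaling whose constants depend only on s (not on h), so for fixed side information S, maximizing U_c over partitions is a K-means problem with squared Euclidean distance. -/
/-!
Row `i` of `S - H * G` is `e_{s i} - G_{h i}`, with squared norm `1 - 2 G_{h i, s i} + ‖G_{h i}‖²`.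
Grouping the points by cluster and label, both `∑ᵢ G_{h i, s i}` and `∑ᵢ ‖G_{h i}‖²` equal
`∑_{k,j} n_{kj}² / n_{k+}`, so `‖S - H * G‖_F² = n' - ∑_{k,j} n_{kj}² / n_{k+}`; on the other side
`p_{k+} (p_{kj} / p_{k+})² = n_{kj}² / (n' n_{k+})`.
-/

open Finset

section

variable {ι α β R : Type*}

lemma sum_comp_eq_sum_card_fiber_mul [Fintype ι] [Fintype α] [DecidableEq α] [Semiring R]
    (g : ι → α) (f : α → R) :
    ∑ i, f (g i) = ∑ a, (#{i | g i = a} : R) * f a := by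
  rw [← Finset.sum_fiberwise' univ g f]
  simp only [sum_const, nsmul_eq_mul]

def oneHot (R : Type*) [Zero R] [One R] [DecidableEq α] (f : ι → α) : Matrix ι α R :=
  Matrix.of fun i a => if f i = a then 1 else 0

lemma oneHot_apply [Zero R] [One R] [DecidableEq α] (f : ι → α) (i : ι) (a : α) :
    oneHot R f i a = if f i = a then 1 else 0 := rfl

lemma oneHot_mul_apply [Fintype α] [DecidableEq α] [NonAssocSemiring R] (f : ι → α)
    (M : Matrix α β R) (i : ι) (b : β) : (oneHot R f * M) i b = M (f i) b := by
  simp [oneHot, Matrix.mul_apply, ite_mul]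

lemma sum_sq_indicator_sub [Fintype β] [DecidableEq β] [CommRing R] (b : β) (c : β → R) :
    ∑ j, ((if b = j then 1 else 0) - c j) ^ 2 = 1 - 2 * c b + ∑ j, c j ^ 2 := by
  have expand : ∀ j, ((if b = j then (1 : R) else 0) - c j) ^ 2
      = (if b = j then 1 - 2 * c j else 0) + c j ^ 2 := fun j => by split_ifs <;> ring
  simp only [expand, sum_add_distrib, sum_ite_eq, mem_univ, if_true]

lemma mul_div_sq_eq_sq_div {K : Type*} [Field K] (x y : K) : x * (y / x) ^ 2 = y ^ 2 / x := by
  rcases eq_or_ne x 0 with rfl | hx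
  · simp
  · field_simp

variable [Fintype ι] [DecidableEq α] [DecidableEq β]

noncomputable def centroidMatrix (h : ι → α) (s : ι → β) : Matrix α β ℝ :=
  Matrix.of fun k j => (#{i | h i = k ∧ s i = j} : ℝ) / #{i | h i = k}

variable [Fintype α] [Fintype β]

lemma sum_centroidMatrix_apply_label (h : ι → α) (s : ι → β) :
    ∑ i, centroidMatrix h s (h i) (s i)
      = ∑ k, ∑ j, (#{i | h i = k ∧ s i = j} : ℝ) ^ 2 / #{i | h i = k} := by
  rw [sum_comp_eq_sum_card_fiber_mul (fun i => (h i, s i)) fun p => centroidMatrix h s p.1 p.2,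
    Fintype.sum_prod_type]
  simp only [Prod.ext_iff, centroidMatrix, Matrix.of_apply, mul_div_assoc', sq]

lemma sum_sum_centroidMatrix_sq (h : ι → α) (s : ι → β) :
    ∑ i, ∑ j, centroidMatrix h s (h i) j ^ 2
      = ∑ k, ∑ j, (#{i | h i = k ∧ s i = j} : ℝ) ^ 2 / #{i | h i = k} := by
  rw [sum_comp_eq_sum_card_fiber_mul h fun k => ∑ j, centroidMatrix h s k j ^ 2]
  simp only [mul_sum, centroidMatrix, Matrix.of_apply, mul_div_sq_eq_sq_div]

lemma sum_sq_oneHot_sub_oneHot_mul_centroidMatrix (h : ι → α) (s : ι → β) :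
    ∑ i, ∑ j, ((oneHot ℝ s - oneHot ℝ h * centroidMatrix h s) i j) ^ 2
      = Fintype.card ι - ∑ k, ∑ j, (#{i | h i = k ∧ s i = j} : ℝ) ^ 2 / #{i | h i = k} := by
  have row : ∀ i, ∑ j, ((oneHot ℝ s - oneHot ℝ h * centroidMatrix h s) i j) ^ 2
      = 1 - 2 * centroidMatrix h s (h i) (s i) + ∑ j, centroidMatrix h s (h i) j ^ 2 := fun i => by
    simp only [Matrix.sub_apply, oneHot_mul_apply, oneHot_apply, sum_sq_indicator_sub]
  rw [sum_congr rfl fun i _ => row i, sum_add_distrib, sum_sub_distrib, ← mul_sum,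
    sum_centroidMatrix_apply_label, sum_sum_centroidMatrix_sq, sum_const, card_univ, nsmul_one]
  ring

end

theorem category_utility_eq_neg_kmeans_objective_general
    (n' K K' : ℕ) (hn' : 0 < n')
    (s : Fin n' → Fin K') (h : Fin n' → Fin K)
    (S : Matrix (Fin n') (Fin K') ℝ)
    (hS : ∀ i j, S i j = if s i = j then (1 : ℝ) else 0)
    (H : Matrix (Fin n') (Fin K) ℝ)
    (hH : ∀ i k, H i k = if h i = k then (1 : ℝ) else 0)
    (nkj : Fin K → Fin K' → ℕ)
    (hnkj : ∀ k j, nkj k j = (Finset.univ.filter (fun i => h i = k ∧ s i = j)).card)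
    (nk : Fin K → ℕ)
    (hnk : ∀ k, nk k = (Finset.univ.filter (fun i => h i = k)).card)
    (G : Matrix (Fin K) (Fin K') ℝ)
    (hG : ∀ k j, G k j = (nkj k j : ℝ) / (nk k : ℝ))
    (pkj : Fin K → Fin K' → ℝ)
    (hpkj : ∀ k j, pkj k j = (nkj k j : ℝ) / (n' : ℝ))
    (pk : Fin K → ℝ)
    (hpk : ∀ k, pk k = (nk k : ℝ) / (n' : ℝ))
    (pj : Fin K' → ℝ)
    (Uc : ℝ)
    (hUc : Uc = (∑ k, pk k * ∑ j, (pkj k j / pk k) ^ 2) - ∑ j, (pj j) ^ 2) :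
    Uc = -(1 / (n' : ℝ)) * (∑ i, ∑ j, ((S - H * G) i j) ^ 2)
          + (1 - ∑ j, (pj j) ^ 2) := by
  have hn : (n' : ℝ) ≠ 0 := by positivity
  obtain rfl : S = oneHot ℝ s := Matrix.ext hS
  obtain rfl : H = oneHot ℝ h := Matrix.ext hH
  obtain rfl : G = centroidMatrix h s := Matrix.ext fun k j => by
    rw [hG, hnkj, hnk]
    rfl
  have summand : ∀ k j, pk k * (pkj k j / pk k) ^ 2 = (nkj k j : ℝ) ^ 2 / nk k / n' := by
    intro k j
    rw [mul_div_sq_eq_sq_div, hpkj, hpk]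
    field_simp
  simp only [hUc, sum_sq_oneHot_sub_oneHot_mul_centroidMatrix, Fintype.card_fin, mul_sum, summand,
    ← sum_div, hnkj, hnk]
  field_simp
  ring

/-- **Main Lemma.** The category utility function satisfies
`U_c = −(1/n') · ‖S − H * G‖_F² + (1 − Σ_j (p_{+j})²)`; the affine constants depend only on
the labeling `s`, so maximizing `U_c` over partitions is a K-means problem with squared
Euclidean distance. -/
theorem category_utility_eq_neg_kmeans_objective
    (n' K K' : ℕ) (hn' : 0 < n') (hK : 0 < K) (hK' : 0 < K')
    (s : Fin n' → Fin K') (h : Fin n' → Fin K) (hsurj : Function.Surjective h)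
    (S : Matrix (Fin n') (Fin K') ℝ)
    (hS : ∀ i j, S i j = if s i = j then (1 : ℝ) else 0)
    (H : Matrix (Fin n') (Fin K) ℝ)
    (hH : ∀ i k, H i k = if h i = k then (1 : ℝ) else 0)
    (nkj : Fin K → Fin K' → ℕ)
    (hnkj : ∀ k j, nkj k j = (Finset.univ.filter (fun i => h i = k ∧ s i = j)).card)
    (nk : Fin K → ℕ)
    (hnk : ∀ k, nk k = (Finset.univ.filter (fun i => h i = k)).card)
    (nj : Fin K' → ℕ)
    (hnj : ∀ j, nj j = (Finset.univ.filter (fun i => s i = j)).card)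
    (G : Matrix (Fin K) (Fin K') ℝ)
    (hG : ∀ k j, G k j = (nkj k j : ℝ) / (nk k : ℝ))
    (pkj : Fin K → Fin K' → ℝ)
    (hpkj : ∀ k j, pkj k j = (nkj k j : ℝ) / (n' : ℝ))
    (pk : Fin K → ℝ)
    (hpk : ∀ k, pk k = (nk k : ℝ) / (n' : ℝ))
    (pj : Fin K' → ℝ)
    (hpj : ∀ j, pj j = (nj j : ℝ) / (n' : ℝ))
    (Uc : ℝ)
    (hUc : Uc = (∑ k, pk k * ∑ j, (pkj k j / pk k) ^ 2) - ∑ j, (pj j) ^ 2) :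
    Uc = -(1 / (n' : ℝ)) * (∑ i, ∑ j, ((S - H * G) i j) ^ 2)
          + (1 - ∑ j, (pj j) ^ 2) :=
  category_utility_eq_neg_kmeans_objective_general n' K K' hn' s h S hS H hH nkj hnkj nk hnk G hG
    pkj hpkj pk hpk pj Uc hUc
end

section
/- Let n' be a positive natural number, K, K' positive natural numbers, s : Fin n' → Fin K' a labeling, and h : Fin n' → Fin K a surjective partition assignment. Then the category utility function is bounded above by the constant depending only on s: U_c ≤ 1 − Σ_{j=1}^{K'} (p_{+j})². -/
/-!
Within a cluster `k` the conditional proportions `p_{kj} / p_{k+}` are nonnegative and sum to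
one (or are all `0` for an empty cluster), so their squares sum to at most one. Averaging these
bounds with the weights `p_{k+}`, which sum to at most one, bounds the first term of `U_c` by `1`.
-/

open Finset

theorem Finset.sum_div_sum_sq_le_one {ι 𝕜 : Type*} [Field 𝕜] [LinearOrder 𝕜]
    [IsStrictOrderedRing 𝕜] {s : Finset ι} {x : ι → 𝕜} (hx : ∀ i ∈ s, 0 ≤ x i) :
    ∑ i ∈ s, (x i / ∑ j ∈ s, x j) ^ 2 ≤ 1 := by
  simp_rw [div_pow]
  rw [← sum_div]
  exact div_le_one_of_le₀ (sum_sq_le_sq_sum_of_nonneg hx) (sq_nonneg _)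

section Counting

variable {α β γ : Type*} [Fintype α] [DecidableEq β]

theorem Finset.sum_card_filter_eq_card (f : α → β) [Fintype β] :
    ∑ b, #{a | f a = b} = Fintype.card α :=
  (card_eq_sum_card_fiberwise fun a _ => mem_univ (f a)).symm

theorem Finset.sum_card_filter_and_eq (f : α → β) (g : α → γ) [Fintype γ] [DecidableEq γ]
    (b : β) : ∑ c, #{a | f a = b ∧ g a = c} = #{a | f a = b} := by
  rw [card_eq_sum_card_fiberwise (f := g) (t := univ) fun a _ => mem_univ (g a)]
  simp only [filter_filter]

end Counting

theorem category_utility_upper_bound_general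
    (n' K K' : ℕ)
    (s : Fin n' → Fin K') (h : Fin n' → Fin K)
    (nkj : Fin K → Fin K' → ℕ)
    (hnkj : ∀ k j, nkj k j = (Finset.univ.filter (fun i => h i = k ∧ s i = j)).card)
    (nk : Fin K → ℕ)
    (hnk : ∀ k, nk k = (Finset.univ.filter (fun i => h i = k)).card)
    (pkj : Fin K → Fin K' → ℝ)
    (hpkj : ∀ k j, pkj k j = (nkj k j : ℝ) / (n' : ℝ))
    (pk : Fin K → ℝ)
    (hpk : ∀ k, pk k = (nk k : ℝ) / (n' : ℝ))
    (pj : Fin K' → ℝ)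
    (Uc : ℝ)
    (hUc : Uc = (∑ k, pk k * ∑ j, (pkj k j / pk k) ^ 2) - ∑ j, (pj j) ^ 2) :
    Uc ≤ 1 - ∑ j, (pj j) ^ 2 := by
  have hrow : ∀ k, ∑ j, pkj k j = pk k := fun k => by
    simp only [hpkj, hpk, hnkj, hnk, ← sum_div, ← Nat.cast_sum, sum_card_filter_and_eq]
  have htotal : ∑ k, pk k ≤ 1 := by
    simp only [hpk, hnk, ← sum_div, ← Nat.cast_sum, sum_card_filter_eq_card, Fintype.card_fin]
    exact div_self_le_one _
  have hinner : ∀ k, ∑ j, (pkj k j / pk k) ^ 2 ≤ 1 := fun k => by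
    rw [← hrow k]
    exact sum_div_sum_sq_le_one fun j _ => by rw [hpkj]; positivity
  have hweighted : ∑ k, pk k * ∑ j, (pkj k j / pk k) ^ 2 ≤ ∑ k, pk k :=
    sum_le_sum fun k _ => mul_le_of_le_one_right (by rw [hpk]; positivity) (hinner k)
  rw [hUc]
  linarith

/-- The category utility function is bounded above by the constant
depending only on the labeling: `U_c ≤ 1 − Σ_j (p_{+j})²`. -/
theorem category_utility_upper_bound
    (n' K K' : ℕ) (hn' : 0 < n') (hK : 0 < K) (hK' : 0 < K')
    (s : Fin n' → Fin K') (h : Fin n' → Fin K) (hsurj : Function.Surjective h)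
    (nkj : Fin K → Fin K' → ℕ)
    (hnkj : ∀ k j, nkj k j = (Finset.univ.filter (fun i => h i = k ∧ s i = j)).card)
    (nk : Fin K → ℕ)
    (hnk : ∀ k, nk k = (Finset.univ.filter (fun i => h i = k)).card)
    (nj : Fin K' → ℕ)
    (hnj : ∀ j, nj j = (Finset.univ.filter (fun i => s i = j)).card)
    (pkj : Fin K → Fin K' → ℝ)
    (hpkj : ∀ k j, pkj k j = (nkj k j : ℝ) / (n' : ℝ))
    (pk : Fin K → ℝ)
    (hpk : ∀ k, pk k = (nk k : ℝ) / (n' : ℝ))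
    (pj : Fin K' → ℝ)
    (hpj : ∀ j, pj j = (nj j : ℝ) / (n' : ℝ))
    (Uc : ℝ)
    (hUc : Uc = (∑ k, pk k * ∑ j, (pkj k j / pk k) ^ 2) - ∑ j, (pj j) ^ 2) :
    Uc ≤ 1 - ∑ j, (pj j) ^ 2 :=
  category_utility_upper_bound_general n' K K' s h nkj hnkj nk hnk pkj hpkj pk hpk pj Uc hUc
end

section
/- Let n' be a positive natural number, K, K' positive natural numbers, and s : Fin n' → Fin K' a labeling. For any two surjective partition assignments h¹ : Fin n' → Fin K and h² : Fin n' → Fin K with one-hot matrices H¹, H² and centroid matrices G¹, G² respectively, one has U_c(h¹) ≥ U_c(h²) if and only if ‖S − H¹ * G¹‖_F² ≤ ‖S − H² * G²‖_F²; i.e., maximizing the category utility function over partitions of the data is equivalent to minimizing the squared Frobenius distance of the one-hot side-information matrix S to its cluster-wise centroid reconstruction. -/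
/-!
Both sides are affine in the same quantity `E = ∑ₖ ∑ⱼ n_{kj}² / n_{k+}`: the category utility is
`E / n' - ∑ⱼ p_{+j}²`, while the `i`-th row of `S - H G` is the one-hot vector of `s i` minus the
mean of those vectors over the cluster of `i`, so by the variance identity on each cluster
`‖S - H G‖_F² = n' - E`. Hence maximizing one is minimizing the other.
-/

open Finset

theorem Finset.sum_sub_sum_div_card_sq {ι 𝕜 : Type*} [Field 𝕜] [CharZero 𝕜]
    (A : Finset ι) (f : ι → 𝕜) :
    ∑ i ∈ A, (f i - (∑ i ∈ A, f i) / #A) ^ 2 =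
      ∑ i ∈ A, f i ^ 2 - (∑ i ∈ A, f i) ^ 2 / #A := by
  rcases A.eq_empty_or_nonempty with rfl | hA
  · simp
  have hcard : (#A : 𝕜) ≠ 0 := Nat.cast_ne_zero.2 hA.card_pos.ne'
  simp only [sub_sq, sum_add_distrib, sum_sub_distrib, sum_const, nsmul_eq_mul, ← sum_mul,
    ← mul_sum]
  field_simp
  ring

theorem Matrix.mul_apply_of_oneHot {ι κ γ R : Type*} [Fintype κ] [DecidableEq κ]
    [NonAssocSemiring R] {h : ι → κ} {H : Matrix ι κ R}
    (hH : ∀ i k, H i k = if h i = k then 1 else 0) (G : Matrix κ γ R) (i : ι) (j : γ) :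
    (H * G) i j = G (h i) j := by
  simp [Matrix.mul_apply, hH]

namespace Clustering

variable {ι κ γ : Type*} [Fintype ι] [DecidableEq κ] [DecidableEq γ]

def clusterCount (h : ι → κ) (k : κ) : ℕ := #{i | h i = k}

def jointCount (h : ι → κ) (s : ι → γ) (k : κ) (j : γ) : ℕ := #{i | h i = k ∧ s i = j}

/-- `∑ₖ ∑ⱼ n_{kj}² / n_{k+}`, the squared Frobenius norm of the centroid reconstruction. -/
noncomputable def centroidEnergy [Fintype κ] [Fintype γ] (h : ι → κ) (s : ι → γ) : ℝ :=
  ∑ k, ∑ j, (jointCount h s k j : ℝ) ^ 2 / clusterCount h k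

theorem sum_sum_jointCount [Fintype κ] [Fintype γ] (h : ι → κ) (s : ι → γ) :
    ∑ k, ∑ j, jointCount h s k j = Fintype.card ι := by
  rw [← Fintype.sum_prod_type', ← card_univ,
    card_eq_sum_card_fiberwise (fun i _ => mem_univ (h i, s i))]
  simp [jointCount, Prod.ext_iff]

theorem sum_fiber_sq_sub_centroid (h : ι → κ) (s : ι → γ) (k : κ) (j : γ) :
    ∑ i ∈ {i | h i = k}, ((if s i = j then 1 else 0) -
        (jointCount h s k j : ℝ) / clusterCount h k) ^ 2 =
      jointCount h s k j - (jointCount h s k j : ℝ) ^ 2 / clusterCount h k := by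
  have hsum : ∑ i ∈ {i | h i = k}, (if s i = j then (1 : ℝ) else 0) = jointCount h s k j := by
    rw [sum_boole, filter_filter]
    rfl
  have hcard : #{i | h i = k} = clusterCount h k := rfl
  simpa [hsum, hcard, ite_pow] using
    sum_sub_sum_div_card_sq {i | h i = k} fun i => if s i = j then (1 : ℝ) else 0

theorem frobenius_sq_sub_oneHot_mul_centroid [Fintype κ] [Fintype γ] {h : ι → κ} {s : ι → γ}
    {S : Matrix ι γ ℝ} (hS : ∀ i j, S i j = if s i = j then 1 else 0)
    {H : Matrix ι κ ℝ} (hH : ∀ i k, H i k = if h i = k then 1 else 0)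
    {G : Matrix κ γ ℝ} (hG : ∀ k j, G k j = (jointCount h s k j : ℝ) / clusterCount h k) :
    ∑ i, ∑ j, ((S - H * G) i j) ^ 2 = Fintype.card ι - centroidEnergy h s := by
  calc ∑ i, ∑ j, ((S - H * G) i j) ^ 2
      = ∑ k, ∑ j, ∑ i ∈ {i | h i = k},
          ((if s i = j then 1 else 0) - (jointCount h s k j : ℝ) / clusterCount h k) ^ 2 := by
        rw [← sum_fiberwise univ h]
        refine sum_congr rfl fun k _ => ?_
        rw [sum_comm]
        refine sum_congr rfl fun j _ => sum_congr rfl fun i hi => ?_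
        rw [Matrix.sub_apply, Matrix.mul_apply_of_oneHot hH, hS, (mem_filter.1 hi).2, hG]
    _ = ∑ k, ∑ j,
          ((jointCount h s k j : ℝ) - (jointCount h s k j : ℝ) ^ 2 / clusterCount h k) := by
        simp only [sum_fiber_sq_sub_centroid]
    _ = Fintype.card ι - centroidEnergy h s := by
        rw [centroidEnergy, ← sum_sum_jointCount h s]
        push_cast
        simp only [sum_sub_distrib]

theorem sum_clusterProp_mul_sum_sq [Fintype κ] [Fintype γ] (h : ι → κ) (s : ι → γ) {N : ℝ}
    (hN : N ≠ 0) :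
    ∑ k, (clusterCount h k : ℝ) / N *
        ∑ j, ((jointCount h s k j : ℝ) / N / ((clusterCount h k : ℝ) / N)) ^ 2 =
      centroidEnergy h s / N := by
  rw [centroidEnergy, sum_div]
  refine sum_congr rfl fun k _ => ?_
  rw [sum_div, mul_sum]
  refine sum_congr rfl fun j _ => ?_
  rw [div_div_div_cancel_right₀ hN]
  rcases eq_or_ne (clusterCount h k : ℝ) 0 with hk | hk
  · simp [hk]
  · field_simp

end Clustering

open Clustering in
theorem category_utility_ge_iff_frobenius_le_general
    (n' K K' : ℕ) (hn' : 0 < n')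
    (s : Fin n' → Fin K')
    (h₁ h₂ : Fin n' → Fin K)
    (S : Matrix (Fin n') (Fin K') ℝ)
    (hS : ∀ i j, S i j = if s i = j then (1 : ℝ) else 0)
    (H₁ H₂ : Matrix (Fin n') (Fin K) ℝ)
    (hH₁ : ∀ i k, H₁ i k = if h₁ i = k then (1 : ℝ) else 0)
    (hH₂ : ∀ i k, H₂ i k = if h₂ i = k then (1 : ℝ) else 0)
    (G₁ G₂ : Matrix (Fin K) (Fin K') ℝ)
    (hG₁ : ∀ k j, G₁ k j =
      ((Finset.univ.filter (fun i => h₁ i = k ∧ s i = j)).card : ℝ) /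
      ((Finset.univ.filter (fun i => h₁ i = k)).card : ℝ))
    (hG₂ : ∀ k j, G₂ k j =
      ((Finset.univ.filter (fun i => h₂ i = k ∧ s i = j)).card : ℝ) /
      ((Finset.univ.filter (fun i => h₂ i = k)).card : ℝ))
    (pj : Fin K' → ℝ)
    (Uc₁ Uc₂ : ℝ)
    (hUc₁ : Uc₁ =
      (∑ k, (((Finset.univ.filter (fun i => h₁ i = k)).card : ℝ) / (n' : ℝ)) *
        ∑ j, ((((Finset.univ.filter (fun i => h₁ i = k ∧ s i = j)).card : ℝ) / (n' : ℝ)) /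
          (((Finset.univ.filter (fun i => h₁ i = k)).card : ℝ) / (n' : ℝ))) ^ 2)
      - ∑ j, (pj j) ^ 2)
    (hUc₂ : Uc₂ =
      (∑ k, (((Finset.univ.filter (fun i => h₂ i = k)).card : ℝ) / (n' : ℝ)) *
        ∑ j, ((((Finset.univ.filter (fun i => h₂ i = k ∧ s i = j)).card : ℝ) / (n' : ℝ)) /
          (((Finset.univ.filter (fun i => h₂ i = k)).card : ℝ) / (n' : ℝ))) ^ 2)
      - ∑ j, (pj j) ^ 2) :
    Uc₁ ≥ Uc₂ ↔
      ∑ i, ∑ j, ((S - H₁ * G₁) i j) ^ 2 ≤ ∑ i, ∑ j, ((S - H₂ * G₂) i j) ^ 2 := by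
  have hn : (0 : ℝ) < n' := Nat.cast_pos.2 hn'
  have hUc₁' : Uc₁ = centroidEnergy h₁ s / n' - ∑ j, pj j ^ 2 := by
    rw [hUc₁, ← sum_clusterProp_mul_sum_sq h₁ s hn.ne']
    rfl
  have hUc₂' : Uc₂ = centroidEnergy h₂ s / n' - ∑ j, pj j ^ 2 := by
    rw [hUc₂, ← sum_clusterProp_mul_sum_sq h₂ s hn.ne']
    rfl
  rw [frobenius_sq_sub_oneHot_mul_centroid hS hH₁ hG₁,
    frobenius_sq_sub_oneHot_mul_centroid hS hH₂ hG₂, hUc₁', hUc₂', ge_iff_le,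
    sub_le_sub_iff_right, div_le_div_iff_of_pos_right hn, sub_le_sub_iff_left]

/-- For two surjective partition assignments `h¹, h²` of the same data with
one-hot matrices `H¹, H²` and centroid matrices `G¹, G²`, one has `U_c(h¹) ≥ U_c(h²)` iff
`‖S − H¹ * G¹‖_F² ≤ ‖S − H² * G²‖_F²`: maximizing the category utility is equivalent to
minimizing the squared Frobenius distance of `S` to its cluster-wise centroid
reconstruction. -/
theorem category_utility_ge_iff_frobenius_le
    (n' K K' : ℕ) (hn' : 0 < n') (hK : 0 < K) (hK' : 0 < K')
    (s : Fin n' → Fin K')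
    (h₁ h₂ : Fin n' → Fin K)
    (hsurj₁ : Function.Surjective h₁) (hsurj₂ : Function.Surjective h₂)
    (S : Matrix (Fin n') (Fin K') ℝ)
    (hS : ∀ i j, S i j = if s i = j then (1 : ℝ) else 0)
    (H₁ H₂ : Matrix (Fin n') (Fin K) ℝ)
    (hH₁ : ∀ i k, H₁ i k = if h₁ i = k then (1 : ℝ) else 0)
    (hH₂ : ∀ i k, H₂ i k = if h₂ i = k then (1 : ℝ) else 0)
    (G₁ G₂ : Matrix (Fin K) (Fin K') ℝ)
    (hG₁ : ∀ k j, G₁ k j =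
      ((Finset.univ.filter (fun i => h₁ i = k ∧ s i = j)).card : ℝ) /
      ((Finset.univ.filter (fun i => h₁ i = k)).card : ℝ))
    (hG₂ : ∀ k j, G₂ k j =
      ((Finset.univ.filter (fun i => h₂ i = k ∧ s i = j)).card : ℝ) /
      ((Finset.univ.filter (fun i => h₂ i = k)).card : ℝ))
    (pj : Fin K' → ℝ)
    (hpj : ∀ j, pj j = ((Finset.univ.filter (fun i => s i = j)).card : ℝ) / (n' : ℝ))
    (Uc₁ Uc₂ : ℝ)
    (hUc₁ : Uc₁ =
      (∑ k, (((Finset.univ.filter (fun i => h₁ i = k)).card : ℝ) / (n' : ℝ)) *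
        ∑ j, ((((Finset.univ.filter (fun i => h₁ i = k ∧ s i = j)).card : ℝ) / (n' : ℝ)) /
          (((Finset.univ.filter (fun i => h₁ i = k)).card : ℝ) / (n' : ℝ))) ^ 2)
      - ∑ j, (pj j) ^ 2)
    (hUc₂ : Uc₂ =
      (∑ k, (((Finset.univ.filter (fun i => h₂ i = k)).card : ℝ) / (n' : ℝ)) *
        ∑ j, ((((Finset.univ.filter (fun i => h₂ i = k ∧ s i = j)).card : ℝ) / (n' : ℝ)) /
          (((Finset.univ.filter (fun i => h₂ i = k)).card : ℝ) / (n' : ℝ))) ^ 2)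
      - ∑ j, (pj j) ^ 2) :
    Uc₁ ≥ Uc₂ ↔
      ∑ i, ∑ j, ((S - H₁ * G₁) i j) ^ 2 ≤ ∑ i, ∑ j, ((S - H₂ * G₂) i j) ^ 2 :=
  category_utility_ge_iff_frobenius_le_general n' K K' hn' s h₁ h₂ S hS H₁ H₂ hH₁ hH₂ G₁ G₂ hG₁ hG₂
    pj Uc₁ Uc₂ hUc₁ hUc₂
end

section
/- Let n' be a positive natural number, K, K' positive natural numbers, s : Fin n' → Fin K' a labeling, and h : Fin n' → Fin K a surjective partition assignment. Then the category utility function is nonnegative: U_c ≥ 0, i.e., Σ_{k=1}^{K} p_{k+} Σ_{j=1}^{K'} (p_{kj}/p_{k+})² ≥ Σ_{j=1}^{K'} (p_{+j})², so that a larger value of U_c corresponds to higher agreement between the partition and the labeling, with U_c = 0 at independence-like configurations. -/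
/-!
Since the column sums of `p_{kj}` are the `p_{+j}` and `Σ_k p_{k+} = 1`, the category utility
splits as `Σ_j (Σ_k p_{kj}² / p_{k+} - (Σ_k p_{kj})² / Σ_k p_{k+})`, and every summand is
nonnegative by the Engel form of Cauchy–Schwarz. Surjectivity of `h` makes each `p_{k+}` positive.
-/

open Finset

lemma sum_card_filter_eq_and {α β γ : Type*} [Fintype α] [Fintype β] [DecidableEq β]
    [DecidableEq γ] (f : α → β) (g : α → γ) (c : γ) :
    ∑ b, #{a | f a = b ∧ g a = c} = #{a | g a = c} := by
  simpa [filter_filter, and_comm] using sum_card_fiberwise_eq_card_filter {a | g a = c} univ f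

lemma sum_card_filter_eq {α β : Type*} [Fintype α] [Fintype β] [DecidableEq β] (f : α → β) :
    ∑ b, #{a | f a = b} = Fintype.card α := by
  simpa using sum_card_fiberwise_eq_card_filter univ univ f

lemma sq_sum_div_sum_le_sum_mul_sum_sq_div {R ι κ : Type*} [Field R] [LinearOrder R]
    [IsStrictOrderedRing R] [Fintype ι] [Fintype κ] (w : ι → R) (q : ι → κ → R)
    (hw : ∀ i, 0 < w i) :
    (∑ j, (∑ i, q i j) ^ 2) / ∑ i, w i ≤ ∑ i, w i * ∑ j, (q i j / w i) ^ 2 := by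
  have hrhs : ∑ i, w i * ∑ j, (q i j / w i) ^ 2 = ∑ j, ∑ i, q i j ^ 2 / w i := by
    rw [sum_comm]
    refine sum_congr rfl fun i _ => ?_
    rw [mul_sum]
    refine sum_congr rfl fun j _ => ?_
    field_simp [(hw i).ne']
  rw [hrhs, sum_div]
  exact sum_le_sum fun j _ => sq_sum_div_le_sum_sq_div _ _ fun i _ => hw i

theorem category_utility_nonneg_general
    (n' K K' : ℕ) (hn' : 0 < n')
    (s : Fin n' → Fin K') (h : Fin n' → Fin K) (hsurj : Function.Surjective h)
    (nkj : Fin K → Fin K' → ℕ)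
    (hnkj : ∀ k j, nkj k j = (Finset.univ.filter (fun i => h i = k ∧ s i = j)).card)
    (nk : Fin K → ℕ)
    (hnk : ∀ k, nk k = (Finset.univ.filter (fun i => h i = k)).card)
    (nj : Fin K' → ℕ)
    (hnj : ∀ j, nj j = (Finset.univ.filter (fun i => s i = j)).card)
    (pkj : Fin K → Fin K' → ℝ)
    (hpkj : ∀ k j, pkj k j = (nkj k j : ℝ) / (n' : ℝ))
    (pk : Fin K → ℝ)
    (hpk : ∀ k, pk k = (nk k : ℝ) / (n' : ℝ))
    (pj : Fin K' → ℝ)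
    (hpj : ∀ j, pj j = (nj j : ℝ) / (n' : ℝ))
    (Uc : ℝ)
    (hUc : Uc = (∑ k, pk k * ∑ j, (pkj k j / pk k) ^ 2) - ∑ j, (pj j) ^ 2) :
    0 ≤ Uc := by
  have hn'_pos : (0 : ℝ) < n' := Nat.cast_pos.2 hn'
  have hpk_pos : ∀ k, 0 < pk k := fun k => by
    obtain ⟨i, rfl⟩ := hsurj k
    rw [hpk, hnk]
    exact div_pos (Nat.cast_pos.2 (card_pos.2 ⟨i, by simp⟩)) hn'_pos
  have hpk_sum : ∑ k, pk k = 1 := by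
    simp only [hpk, hnk, ← sum_div, ← Nat.cast_sum, sum_card_filter_eq, Fintype.card_fin]
    exact div_self hn'_pos.ne'
  have hpj_eq_sum : ∀ j, pj j = ∑ k, pkj k j := fun j => by
    simp only [hpj, hnj, hpkj, hnkj, ← sum_div, ← Nat.cast_sum, sum_card_filter_eq_and]
  rw [hUc, sub_nonneg]
  simpa only [hpj_eq_sum, hpk_sum, div_one] using sq_sum_div_sum_le_sum_mul_sum_sq_div pk pkj hpk_pos

/-- The category utility function is nonnegative: `U_c ≥ 0`, i.e.,
`Σ_k p_{k+} Σ_j (p_{kj}/p_{k+})² ≥ Σ_j (p_{+j})²`. -/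
theorem category_utility_nonneg
    (n' K K' : ℕ) (hn' : 0 < n') (hK : 0 < K) (hK' : 0 < K')
    (s : Fin n' → Fin K') (h : Fin n' → Fin K) (hsurj : Function.Surjective h)
    (nkj : Fin K → Fin K' → ℕ)
    (hnkj : ∀ k j, nkj k j = (Finset.univ.filter (fun i => h i = k ∧ s i = j)).card)
    (nk : Fin K → ℕ)
    (hnk : ∀ k, nk k = (Finset.univ.filter (fun i => h i = k)).card)
    (nj : Fin K' → ℕ)
    (hnj : ∀ j, nj j = (Finset.univ.filter (fun i => s i = j)).card)
    (pkj : Fin K → Fin K' → ℝ)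
    (hpkj : ∀ k j, pkj k j = (nkj k j : ℝ) / (n' : ℝ))
    (pk : Fin K → ℝ)
    (hpk : ∀ k, pk k = (nk k : ℝ) / (n' : ℝ))
    (pj : Fin K' → ℝ)
    (hpj : ∀ j, pj j = (nj j : ℝ) / (n' : ℝ))
    (Uc : ℝ)
    (hUc : Uc = (∑ k, pk k * ∑ j, (pkj k j / pk k) ^ 2) - ∑ j, (pj j) ^ 2) :
    0 ≤ Uc :=
  category_utility_nonneg_general n' K K' hn' s h hsurj nkj hnkj nk hnk nj hnj pkj hpkj pk hpk pj
    hpj Uc hUc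
end
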